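/- Let R be a commutative ring and f ∈ 1 + t·R[[t]]. Then f can be uniquely written as the convergent infinite product f = ∏_{i≥1} (1 − c_i t^i) with c_i ∈ R. -/

import Mathlib

/-!
The product `∏_{i<n} (1 - cᵢ t^{i+1})` changes by the factor `1 - c_n t^{n+1}` when `n` grows,
which leaves the coefficients below `t^{n+1}` untouched and subtracts `c_n` from the coefficient
of `t^{n+1}`. Matching `f` therefore forces `c_n = [t^{n+1}] ∏_{i<n} (1 - cᵢ t^{i+1}) - [t^{n+1}] f`,
a recursion which both defines the `cᵢ` and shows that they are unique. (The `cᵢ` are the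
coordinates of the big Witt vector corresponding to `f`, hence the names.)
-/

open Finset

namespace PowerSeries

section Ring

variable {R : Type*} [Ring R]

lemma coeff_mul_one_sub_C_mul_X_pow_of_lt (p : R⟦X⟧) (a : R) {k m : ℕ} (hk : k < m) :
    coeff k (p * (1 - C a * X ^ m)) = coeff k p := by
  rw [mul_sub, mul_one, ← mul_assoc, map_sub, coeff_mul_X_pow', if_neg (by omega), sub_zero]

lemma coeff_mul_one_sub_C_mul_X_pow_self (p : R⟦X⟧) (a : R) (m : ℕ) :
    coeff m (p * (1 - C a * X ^ m)) = coeff m p - constantCoeff p * a := by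
  rw [mul_sub, mul_one, ← mul_assoc, map_sub, coeff_mul_X_pow', if_pos le_rfl, Nat.sub_self,
    coeff_mul_C, coeff_zero_eq_constantCoeff_apply]

end Ring

variable {R : Type*} [CommRing R]

noncomputable def partialWittProduct (c : ℕ → R) (n : ℕ) : R⟦X⟧ :=
  ∏ i ∈ range n, (1 - C (c i) * X ^ (i + 1))

lemma partialWittProduct_succ (c : ℕ → R) (n : ℕ) :
    partialWittProduct c (n + 1) = partialWittProduct c n * (1 - C (c n) * X ^ (n + 1)) :=
  prod_range_succ _ n

lemma constantCoeff_partialWittProduct (c : ℕ → R) (n : ℕ) :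
    constantCoeff (partialWittProduct c n) = 1 :=
  (map_prod _ _ _).trans <| prod_eq_one fun i _ => by simp [pow_succ]

lemma partialWittProduct_congr {c d : ℕ → R} {n : ℕ} (h : ∀ i < n, c i = d i) :
    partialWittProduct c n = partialWittProduct d n :=
  prod_congr rfl fun i hi => by rw [h i (mem_range.mp hi)]

theorem forall_coeff_partialWittProduct_eq_iff {f : R⟦X⟧} (hf : constantCoeff f = 1)
    (c : ℕ → R) :
    (∀ n k, k ≤ n → coeff k (partialWittProduct c n) = coeff k f) ↔
      ∀ i, c i = coeff (i + 1) (partialWittProduct c i) - coeff (i + 1) f := by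
  constructor
  · intro h i
    have hi := h (i + 1) (i + 1) le_rfl
    rw [partialWittProduct_succ, coeff_mul_one_sub_C_mul_X_pow_self,
      constantCoeff_partialWittProduct, one_mul] at hi
    rw [← hi, sub_sub_cancel]
  · intro h n
    induction n with
    | zero =>
      intro k hk
      rw [Nat.le_zero.mp hk, coeff_zero_eq_constantCoeff_apply, coeff_zero_eq_constantCoeff_apply,
        constantCoeff_partialWittProduct, hf]
    | succ n ih =>
      intro k hk
      rw [partialWittProduct_succ]
      rcases hk.lt_or_eq with hk | rfl
      · rw [coeff_mul_one_sub_C_mul_X_pow_of_lt _ _ hk]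
        exact ih k (Nat.lt_succ_iff.mp hk)
      · rw [coeff_mul_one_sub_C_mul_X_pow_self, constantCoeff_partialWittProduct, one_mul, h n,
          sub_sub_cancel]

noncomputable def wittCoeffs (f : R⟦X⟧) (i : ℕ) : R :=
  coeff (i + 1) (∏ j ∈ (range i).attach, (1 - C (wittCoeffs f j) * X ^ (j.1 + 1))) -
    coeff (i + 1) f
decreasing_by exact mem_range.mp j.2

lemma wittCoeffs_eq (f : R⟦X⟧) (i : ℕ) :
    wittCoeffs f i = coeff (i + 1) (partialWittProduct (wittCoeffs f) i) - coeff (i + 1) f := by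
  rw [wittCoeffs, partialWittProduct, ← prod_attach (range i)]

lemma eq_wittCoeffs {f : R⟦X⟧} {c : ℕ → R}
    (hc : ∀ i, c i = coeff (i + 1) (partialWittProduct c i) - coeff (i + 1) f) :
    c = wittCoeffs f := by
  funext i
  induction i using Nat.strong_induction_on with
  | _ i ih => rw [hc, wittCoeffs_eq, partialWittProduct_congr ih]

end PowerSeries

theorem powerSeries_unique_product_decomposition
    (R : Type*) [CommRing R] (f : PowerSeries R)
    (hf : PowerSeries.constantCoeff (R := R) f = 1) :
    ∃! c : ℕ → R, ∀ n : ℕ, ∀ k : ℕ, k ≤ n →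
      PowerSeries.coeff (R := R) k
          (∏ i ∈ Finset.range n, (1 - PowerSeries.C (R := R) (c i) * PowerSeries.X ^ (i + 1))) =
        PowerSeries.coeff (R := R) k f :=
  ⟨PowerSeries.wittCoeffs f,
    (PowerSeries.forall_coeff_partialWittProduct_eq_iff hf _).2 (PowerSeries.wittCoeffs_eq f),
    fun _ hc => PowerSeries.eq_wittCoeffs
      ((PowerSeries.forall_coeff_partialWittProduct_eq_iff hf _).1 hc)⟩
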